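/- arXiv:2604.25513 — 4 statements merged into one kernel-verified Lean document; each statement's English description precedes it below -/
import Mathlib

section
/- Let F : Γ₊ → (0,∞) be a smooth symmetric function that is homogeneous of degree one, normalized by F(1,…,1) = 1, and such that Φ(z) := log F(e^{z₁},…,e^{zₙ}) is convex on ℝⁿ. Then for all κ ∈ Γ₊, F(κ) ≥ (∏_{i=1}^n κ_i)^{1/n}. -/
open Real Finset

/-- Geometric-mean lower bound for a symmetric, degree-one homogeneous,
normalized function with `z ↦ log F(e^z)` convex. -/
theorem stmt_4 (n : ℕ) (hn : 0 < n) (F : (Fin n → ℝ) → ℝ)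
    (hpos : ∀ κ : Fin n → ℝ, (∀ i, 0 < κ i) → 0 < F κ)
    (hsmooth : ∀ κ : Fin n → ℝ, (∀ i, 0 < κ i) → ContDiffAt ℝ (⊤ : ℕ∞) F κ)
    (hsymm : ∀ (σ : Equiv.Perm (Fin n)) (κ : Fin n → ℝ), F (κ ∘ σ) = F κ)
    (hhom : ∀ (c : ℝ) (κ : Fin n → ℝ), 0 < c → (∀ i, 0 < κ i) → F (c • κ) = c * F κ)
    (hnorm : F (fun _ => 1) = 1)
    (hconv : ConvexOn ℝ Set.univ
      (fun z : Fin n → ℝ => Real.log (F (fun i => Real.exp (z i))))) :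
    ∀ κ : Fin n → ℝ, (∀ i, 0 < κ i) →
      (∏ i, κ i) ^ ((1 : ℝ) / n) ≤ F κ := by
  intro κ hκ
  haveI : NeZero n := ⟨hn.ne'⟩
  set Φ : (Fin n → ℝ) → ℝ :=
    fun z : Fin n → ℝ => Real.log (F (fun i => Real.exp (z i))) with hΦ
  set z : Fin n → ℝ := fun i => Real.log (κ i) with hz
  set c : ℝ := (∑ i, z i) / n with hc
  -- Φ is invariant under permutations
  have hΦinv : ∀ σ : Equiv.Perm (Fin n), Φ (z ∘ σ) = Φ z := by
    intro σ
    simp only [hΦ]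
    have : (fun i => Real.exp ((z ∘ σ) i)) = (fun i => Real.exp (z i)) ∘ σ := rfl
    rw [this, hsymm]
  -- Jensen over cyclic shifts
  have key : Φ (fun _ => c) ≤ Φ z := by
    have hmcl := hconv.map_centerMass_le (t := Finset.univ)
      (w := fun _ : Fin n => (1 : ℝ)) (p := fun k : Fin n => z ∘ Equiv.addRight k)
      (fun _ _ => zero_le_one)
      (by simp [Finset.card_univ]; exact_mod_cast hn)
      (fun _ _ => Set.mem_univ _)
    have hcm : Finset.univ.centerMass (fun _ : Fin n => (1 : ℝ))
        (fun k : Fin n => z ∘ Equiv.addRight k) = fun _ => c := by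
      rw [Finset.centerMass]
      funext i
      simp only [Finset.sum_const, Finset.card_univ, Fintype.card_fin, nsmul_eq_mul,
        mul_one, one_smul]
      have hsum : ∑ k : Fin n, (z ∘ Equiv.addRight k) i = ∑ j, z j := by
        apply Fintype.sum_equiv (Equiv.addLeft i)
        intro k
        simp [Equiv.addRight, add_comm]
      simp only [Finset.smul_sum, Finset.sum_apply, Pi.smul_apply, smul_eq_mul,
        ← Finset.mul_sum]
      rw [hsum, hc]
      ring
    have hcm2 : Finset.univ.centerMass (fun _ : Fin n => (1 : ℝ))
        (Φ ∘ fun k : Fin n => z ∘ Equiv.addRight k) = Φ z := by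
      rw [Finset.centerMass]
      have : ∀ k : Fin n, (Φ ∘ fun k : Fin n => z ∘ Equiv.addRight k) k = Φ z := by
        intro k; exact hΦinv (Equiv.addRight k)
      simp only [Function.comp] at this ⊢
      simp only [one_smul]
      rw [Finset.sum_congr rfl (fun k _ => hΦinv (Equiv.addRight k))]
      simp [Finset.card_univ]
      rw [← mul_assoc, inv_mul_cancel₀ (by exact_mod_cast hn.ne' : (n:ℝ) ≠ 0), one_mul]
    rw [hcm, hcm2] at hmcl
    exact hmcl
  -- Compute Φ (fun _ => c) = c
  have hleft : Φ (fun _ => c) = c := by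
    simp only [hΦ]
    have : (fun _ : Fin n => Real.exp c) = Real.exp c • (fun _ : Fin n => (1:ℝ)) := by
      funext i; simp
    rw [this, hhom _ _ (Real.exp_pos c) (fun _ => one_pos), hnorm, mul_one,
      Real.log_exp]
  -- Φ z = log F κ
  have hright : Φ z = Real.log (F κ) := by
    simp only [hΦ, hz]
    congr 1
    congr 1
    funext i
    exact Real.exp_log (hκ i)
  -- (∏ κ)^{1/n} = exp c
  have hprod : (∏ i, κ i) ^ ((1 : ℝ) / n) = Real.exp c := by
    rw [← Real.exp_log (Finset.prod_pos (fun i _ => hκ i)),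
      ← Real.exp_mul, hc]
    congr 1
    rw [Real.log_prod (fun i _ => (hκ i).ne')]
    simp [hz]
    ring
  rw [hprod]
  calc Real.exp c ≤ Real.exp (Real.log (F κ)) := by
        apply Real.exp_le_exp.2
        rw [← hleft, ← hright]; exact key
    _ = F κ := Real.exp_log (hpos κ hκ)
end

section
/- Let F : Γ₊ → (0,∞) be smooth, symmetric, homogeneous of degree one with F(1,…,1) = 1, strictly increasing in each variable, and inverse concave (i.e. F*(μ) := 1/F(μ₁⁻¹,…,μₙ⁻¹) is concave on Γ₊). Then for all κ ∈ Γ₊, ∑_{i=1}^n (∂F/∂κ_i)(κ) · κ_i² ≥ F(κ)². -/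
open Real Finset

/-- Andrews–McCoy–Zheng Lemma 5: For a smooth, symmetric, degree-one
homogeneous, normalized, strictly monotone, inverse-concave function `F`,
`∑ Ḟⁱ κᵢ² ≥ F(κ)²`. -/
theorem stmt_9 (n : ℕ) (F : (Fin n → ℝ) → ℝ)
    (hpos : ∀ κ : Fin n → ℝ, (∀ i, 0 < κ i) → 0 < F κ)
    (hsmooth : ∀ κ : Fin n → ℝ, (∀ i, 0 < κ i) → ContDiffAt ℝ (⊤ : ℕ∞) F κ)
    (hsymm : ∀ (σ : Equiv.Perm (Fin n)) (κ : Fin n → ℝ), F (κ ∘ σ) = F κ)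
    (hhom : ∀ (c : ℝ) (κ : Fin n → ℝ), 0 < c → (∀ i, 0 < κ i) → F (c • κ) = c * F κ)
    (hnorm : F (fun _ => 1) = 1)
    (hmono : ∀ κ : Fin n → ℝ, (∀ i, 0 < κ i) → ∀ k, 0 < fderiv ℝ F κ (Pi.single k 1))
    (hinvconc : ConcaveOn ℝ {κ : Fin n → ℝ | ∀ i, 0 < κ i}
      (fun μ : Fin n → ℝ => (F (fun i => (μ i)⁻¹))⁻¹)) :
    ∀ κ : Fin n → ℝ, (∀ i, 0 < κ i) →
      (F κ) ^ 2 ≤ ∑ i, fderiv ℝ F κ (Pi.single i 1) * κ i ^ 2 := by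
  intro κ hκ
  have hFκ : 0 < F κ := hpos κ hκ
  set L := fderiv ℝ F κ with hL
  have hF : DifferentiableAt ℝ F κ := (hsmooth κ hκ).differentiableAt (by simp)
  have hFd : HasFDerivAt F L κ := hF.hasFDerivAt
  -- Euler: L κ = F κ
  have heuler : L κ = F κ := by
    have h1 : HasDerivAt (fun c : ℝ => F (c • κ)) (L κ) 1 := by
      have hsc : HasDerivAt (fun c : ℝ => c • κ) κ 1 := by
        simpa using (hasDerivAt_id (1:ℝ)).smul_const κ
      have hFd' : HasFDerivAt F L ((1:ℝ) • κ) := by simpa using hFd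
      exact (hFd'.comp_hasDerivAt 1 hsc)
    have heq : (fun c : ℝ => F (c • κ)) =ᶠ[nhds 1] (fun c : ℝ => c * F κ) := by
      filter_upwards [Ioi_mem_nhds (show (0:ℝ) < 1 by norm_num)] with c hc
      exact hhom c κ hc hκ
    have h2 : HasDerivAt (fun c : ℝ => c * F κ) (L κ) 1 := h1.congr_of_eventuallyEq heq.symm
    have h3 : HasDerivAt (fun c : ℝ => c * F κ) (F κ) 1 := by
      simpa using (hasDerivAt_id (1:ℝ)).mul_const (F κ)
    exact h2.unique h3
  -- sum identity
  have hsum : ∑ i, L (Pi.single i 1) * κ i ^ 2 = L (fun i => κ i ^ 2) := by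
    have : (fun i => κ i ^ 2) = ∑ i, (κ i ^ 2) • (Pi.single i 1 : Fin n → ℝ) := by
      funext j
      rw [Finset.sum_apply]
      simp [Pi.single_apply]
    rw [this, map_sum]
    simp [mul_comm]
  set S := ∑ i, L (Pi.single i 1) * κ i ^ 2 with hS
  -- the curve ψ
  set μ : Fin n → ℝ := fun i => (κ i)⁻¹ with hμ
  have hμpos : ∀ i, 0 < μ i := fun i => inv_pos.mpr (hκ i)
  set ψ : ℝ → (Fin n → ℝ) := fun s => fun i => (μ i + s * (1 - μ i))⁻¹ with hψ
  have hψ0 : ψ 0 = κ := by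
    funext i; simp [hψ, hμ, inv_inv]
  have hψd : HasDerivAt ψ (fun i => κ i - κ i ^ 2) 0 := by
    rw [hasDerivAt_pi]
    intro i
    have h1 : HasDerivAt (fun s : ℝ => μ i + s * (1 - μ i)) (1 - μ i) 0 := by
      simpa using
        (((hasDerivAt_id (0:ℝ)).mul_const (1 - μ i)))
    have hne : μ i + 0 * (1 - μ i) ≠ 0 := by
      simpa using (hμpos i).ne'
    have : HasDerivAt (fun s => (μ i + s * (1 - μ i))⁻¹) _ 0 := h1.inv hne
    refine this.congr_deriv ?_
    have hκi : κ i ≠ 0 := (hκ i).ne'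
    rw [hμ]
    field_simp
    ring
  -- φ = G ∘ (μ + s(e-μ))
  have hFψ : HasDerivAt (fun s => F (ψ s)) (L (fun i => κ i - κ i ^ 2)) 0 := by
    have hFd'' : HasFDerivAt F L (ψ 0) := hψ0 ▸ hFd
    exact hFd''.comp_hasDerivAt 0 hψd
  have hFψ0 : F (ψ 0) ≠ 0 := by rw [hψ0]; exact hFκ.ne'
  have hφd : HasDerivAt (fun s => (F (ψ s))⁻¹)
      (-(L (fun i => κ i - κ i ^ 2)) / (F κ) ^ 2) 0 := by
    have := hFψ.inv hFψ0
    rw [hψ0] at this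
    exact this
  set D : ℝ := -(L (fun i => κ i - κ i ^ 2)) / (F κ) ^ 2 with hD
  -- concavity slope bound
  have hGμ : (fun μ' : Fin n → ℝ => (F (fun i => (μ' i)⁻¹))⁻¹) μ = (F κ)⁻¹ := by
    simp only [hμ, inv_inv]
  have hslope : ∀ s ∈ Set.Ioc (0:ℝ) 1,
      1 - (F κ)⁻¹ ≤ ((F (ψ s))⁻¹ - (F (ψ 0))⁻¹) / s := by
    intro s hs
    obtain ⟨hs0, hs1⟩ := hs
    have hμmem : μ ∈ {κ : Fin n → ℝ | ∀ i, 0 < κ i} := hμpos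
    have hemem : (fun _ : Fin n => (1:ℝ)) ∈ {κ : Fin n → ℝ | ∀ i, 0 < κ i} := fun i => one_pos
    have hconc := hinvconc.2 hμmem hemem (by linarith : (0:ℝ) ≤ 1 - s) hs0.le (by ring)
    have hpt : (1 - s) • μ + s • (fun _ : Fin n => (1:ℝ)) = fun i => μ i + s * (1 - μ i) := by
      funext i
      simp [Pi.smul_apply, smul_eq_mul]
      ring
    rw [hpt, hGμ] at hconc
    simp only [smul_eq_mul, inv_one, hnorm] at hconc
    -- hconc : (1-s) * (F κ)⁻¹ + s * 1 ≤ (F (ψ s))⁻¹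
    rw [hψ0, le_div_iff₀ hs0]
    nlinarith [hconc]
  -- limit
  have htend : Filter.Tendsto (slope (fun s => (F (ψ s))⁻¹) 0) (nhdsWithin 0 (Set.Ioi 0)) (nhds D) := by
    have := hasDerivAt_iff_tendsto_slope.mp hφd
    exact this.mono_left (nhdsWithin_mono _ (fun x hx => ne_of_gt hx))
  have hDbound : 1 - (F κ)⁻¹ ≤ D := by
    refine ge_of_tendsto htend ?_
    filter_upwards [Ioc_mem_nhdsGT_of_mem (Set.mem_Ico.mpr ⟨le_refl 0, one_pos⟩)] with s hs
    have h := hslope s hs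
    rwa [show slope (fun s => (F (ψ s))⁻¹) 0 s = ((F (ψ s))⁻¹ - (F (ψ 0))⁻¹) / s from by
      rw [slope_def_field, sub_zero]] 
  -- compute D
  have hlin : L (fun i => κ i - κ i ^ 2) = F κ - S := by
    have : (fun i => κ i - κ i ^ 2) = κ - (fun i => κ i ^ 2) := by funext i; simp
    rw [this, map_sub, heuler, hsum]
  rw [hD, hlin] at hDbound
  have hFκ2 : (0:ℝ) < (F κ)^2 := by positivity
  rw [le_div_iff₀ hFκ2] at hDbound
  have hinv : (F κ)⁻¹ * F κ = 1 := inv_mul_cancel₀ hFκ.ne'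
  nlinarith [hDbound, hinv, hFκ, mul_pos hFκ hFκ]
end

section
/- Let n ≥ 2 and let κ₁ ≤ κ₂ ≤ ⋯ ≤ κₙ be positive reals with κ_i κ_j > 1 for all i ≠ j. Let F : Γ₊ → (0,∞) be smooth, symmetric, with ∂F/∂κ_i > 0, and satisfying (κ_i ∂F/∂κ_i − κ_j ∂F/∂κ_j)(κ_i − κ_j) ≥ 0 for all i ≠ j. Then ∑_{i=1}^n (∂F/∂κ_i) κ_i² − ∑_{i=1}^n (∂F/∂κ_i) ≥ 0. -/
open Real Finset

/-- If the ordered principal curvatures satisfy `κᵢκⱼ > 1` for `i ≠ j`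
(positive sectional curvature), then `∑ Ḟⁱ κᵢ² − ∑ Ḟⁱ ≥ 0`. -/
theorem stmt_10 (n : ℕ) (hn : 2 ≤ n) (F : (Fin n → ℝ) → ℝ)
    (hpos : ∀ κ : Fin n → ℝ, (∀ i, 0 < κ i) → 0 < F κ)
    (hsmooth : ∀ κ : Fin n → ℝ, (∀ i, 0 < κ i) → ContDiffAt ℝ (⊤ : ℕ∞) F κ)
    (hsymm : ∀ (σ : Equiv.Perm (Fin n)) (κ : Fin n → ℝ), F (κ ∘ σ) = F κ)
    (hmono : ∀ κ : Fin n → ℝ, (∀ i, 0 < κ i) → ∀ k, 0 < fderiv ℝ F κ (Pi.single k 1))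
    (hcond : ∀ κ : Fin n → ℝ, (∀ i, 0 < κ i) → ∀ i j : Fin n, i ≠ j →
      0 ≤ (κ i * fderiv ℝ F κ (Pi.single i 1) - κ j * fderiv ℝ F κ (Pi.single j 1))
        * (κ i - κ j))
    (κ : Fin n → ℝ) (hκpos : ∀ i, 0 < κ i) (hκmono : Monotone κ)
    (hsec : ∀ i j : Fin n, i ≠ j → 1 < κ i * κ j) :
    0 ≤ ∑ i, fderiv ℝ F κ (Pi.single i 1) * κ i ^ 2
        - ∑ i, fderiv ℝ F κ (Pi.single i 1) := by
  set f : Fin n → ℝ := fun i => fderiv ℝ F κ (Pi.single i 1) with hf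
  have hfpos : ∀ i, 0 < f i := fun i => hmono κ hκpos i
  set i0 : Fin n := ⟨0, by omega⟩
  set i1 : Fin n := ⟨1, by omega⟩
  have h01 : i0 ≠ i1 := by simp [i0, i1, Fin.ext_iff]
  have hle01 : κ i0 ≤ κ i1 := hκmono (by simp [i0, i1, Fin.le_def])
  rw [← Finset.sum_sub_distrib]
  have hsplit : ({i0, i1} : Finset (Fin n)) ⊆ Finset.univ := Finset.subset_univ _
  rw [← Finset.sum_sdiff hsplit]
  have h1 : 0 ≤ ∑ i ∈ Finset.univ \ {i0, i1}, (f i * κ i ^ 2 - f i) := by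
    apply Finset.sum_nonneg
    intro i hi
    simp only [Finset.mem_sdiff, Finset.mem_insert, Finset.mem_singleton] at hi
    have hne : i ≠ i0 := fun h => hi.2 (Or.inl h)
    have hsec' := hsec i i0 hne
    have hle : κ i0 ≤ κ i := hκmono (by simp [i0, Fin.le_def])
    nlinarith [hfpos i, hκpos i, hκpos i0, mul_nonneg (hκpos i).le (sub_nonneg.2 hle)]
  have h2 : 0 ≤ ∑ i ∈ ({i0, i1} : Finset (Fin n)), (f i * κ i ^ 2 - f i) := by
    rw [Finset.sum_pair h01]
    have hc := hcond κ hκpos i1 i0 (Ne.symm h01)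
    have hs0 := hsec i0 i1 h01
    have hs1 := hsec i1 i0 (Ne.symm h01)
    change 0 ≤ (κ i1 * f i1 - κ i0 * f i0) * (κ i1 - κ i0) at hc
    nlinarith [hfpos i0, hfpos i1, hκpos i0, hκpos i1]
  linarith
end

section
/- Let F : Γ₊ → (0,∞) be smooth, symmetric, homogeneous of degree one, with ∂F/∂κ_i > 0 and satisfying the log-convexity condition (equivalently, ∑ ∂²F/∂κ_k∂κ_ℓ y_k y_ℓ ≥ F⁻¹(∑ ∂F/∂κ_k y_k)² − ∑ (∂F/∂κ_k)/κ_k y_k² for all y). Then for all i ≠ j with κ_i ≠ κ_j, ( (∂F/∂κ_i − ∂F/∂κ_j)/(κ_i − κ_j) ) + (∂F/∂κ_i)/κ_j ≥ 0. -/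
open Real Finset

/-- A continuous linear functional on `Fin n → ℝ` is determined by its values on
the standard basis. -/
lemma clm_apply_sum_aux {n : ℕ} (L : (Fin n → ℝ) →L[ℝ] ℝ) (y : Fin n → ℝ) :
    L y = ∑ k, L (Pi.single k 1) * y k := by
  have hy : y = ∑ k, y k • (Pi.single k 1 : Fin n → ℝ) := by
    funext m
    simp [Pi.single_apply]
  conv_lhs => rw [hy]
  rw [map_sum]
  refine Finset.sum_congr rfl fun k _ => ?_
  rw [map_smul, smul_eq_mul, mul_comm]

/-- Under the log-convexity condition (ii), for `i ≠ j` with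
`κᵢ ≠ κⱼ`, `(Ḟⁱ − Ḟʲ)/(κᵢ − κⱼ) + Ḟⁱ/κⱼ ≥ 0`. -/
theorem stmt_15 (n : ℕ) (F : (Fin n → ℝ) → ℝ)
    (hpos : ∀ κ : Fin n → ℝ, (∀ i, 0 < κ i) → 0 < F κ)
    (hsmooth : ∀ κ : Fin n → ℝ, (∀ i, 0 < κ i) → ContDiffAt ℝ (⊤ : ℕ∞) F κ)
    (hsymm : ∀ (σ : Equiv.Perm (Fin n)) (κ : Fin n → ℝ), F (κ ∘ σ) = F κ)
    (hhom : ∀ (c : ℝ) (κ : Fin n → ℝ), 0 < c → (∀ i, 0 < κ i) → F (c • κ) = c * F κ)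
    (hmono : ∀ κ : Fin n → ℝ, (∀ i, 0 < κ i) → ∀ k, 0 < fderiv ℝ F κ (Pi.single k 1))
    (hineq : ∀ κ : Fin n → ℝ, (∀ i, 0 < κ i) → ∀ y : Fin n → ℝ,
      (F κ)⁻¹ * (∑ k, fderiv ℝ F κ (Pi.single k 1) * y k) ^ 2
          - ∑ k, fderiv ℝ F κ (Pi.single k 1) / κ k * y k ^ 2 ≤
        ∑ k, ∑ l, fderiv ℝ (fun x => fderiv ℝ F x (Pi.single k 1)) κ (Pi.single l 1)
          * y k * y l) :
    ∀ κ : Fin n → ℝ, (∀ i, 0 < κ i) → ∀ i j : Fin n, i ≠ j → κ i ≠ κ j →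
      0 ≤ (fderiv ℝ F κ (Pi.single i 1) - fderiv ℝ F κ (Pi.single j 1)) / (κ i - κ j)
          + fderiv ℝ F κ (Pi.single i 1) / κ j := by
  intro κ hκ i j hij hvij
  classical
  -- the direction of the exponential path
  set v : Fin n → ℝ := fun k => if k = i then Real.log (κ j) - Real.log (κ i)
    else if k = j then Real.log (κ i) - Real.log (κ j) else 0 with hv
  -- the path itself
  set c : ℝ → Fin n → ℝ := fun t k => κ k * Real.exp (t * v k) with hcdef
  have cpos : ∀ t k, 0 < c t k := fun t k => mul_pos (hκ k) (Real.exp_pos _)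
  have hc0 : c 0 = κ := by funext k; simp [hcdef]
  have hc1 : c 1 = κ ∘ (Equiv.swap i j) := by
    funext k
    simp only [hcdef, Function.comp]
    by_cases hki : k = i
    · rw [hki, Equiv.swap_apply_left]
      simp only [hv, if_pos rfl, one_mul, Real.exp_sub, Real.exp_log (hκ j),
        Real.exp_log (hκ i)]
      rw [mul_comm, div_mul_cancel₀ _ (hκ i).ne']
    · by_cases hkj : k = j
      · rw [hkj, Equiv.swap_apply_right]
        have hvj : v j = Real.log (κ i) - Real.log (κ j) := by simp [hv, Ne.symm hij]
        rw [hvj, one_mul, Real.exp_sub, Real.exp_log (hκ j), Real.exp_log (hκ i),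
          mul_comm, div_mul_cancel₀ _ (hκ j).ne']
      · rw [Equiv.swap_apply_of_ne_of_ne hki hkj]
        simp [hv, hki, hkj]
  -- derivative of the path
  have hcd : ∀ t, HasDerivAt c (fun k => v k * c t k) t := by
    intro t
    rw [hasDerivAt_pi]
    intro k
    have h1 : HasDerivAt (fun t : ℝ => t * v k) (v k) t := by
      simpa using (hasDerivAt_id t).mul_const (v k)
    have h2 := (h1.exp).const_mul (κ k)
    convert h2 using 1
    · rfl
    simp only [hcdef]
    ring
  have hFd : ∀ t, HasFDerivAt F (fderiv ℝ F (c t)) (c t) :=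
    fun t => ((hsmooth (c t) (cpos t)).differentiableAt (by simp)).hasFDerivAt
  set φ : ℝ → ℝ := fun t => F (c t) with hφdef
  set h : ℝ → ℝ := fun t => ∑ k, fderiv ℝ F (c t) (Pi.single k 1) * (v k * c t k) with hhdef
  have hφd : ∀ t, HasDerivAt φ (h t) t := by
    intro t
    have h3 := (hFd t).comp_hasDerivAt t (hcd t)
    have h4 : HasDerivAt φ (fderiv ℝ F (c t) (fun k => v k * c t k)) t := h3
    rw [clm_apply_sum_aux] at h4
    exact h4
  -- derivative of s ↦ Ḟᵏ(c s)
  have hgd : ∀ t (k : Fin n), HasDerivAt (fun s => fderiv ℝ F (c s) (Pi.single k 1))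
      (∑ l, fderiv ℝ (fun x => fderiv ℝ F x (Pi.single k 1)) (c t) (Pi.single l 1)
        * (v l * c t l)) t := by
    intro t k
    have hΦ : DifferentiableAt ℝ (fun x => fderiv ℝ F x (Pi.single k 1)) (c t) := by
      have h2 : ContDiffAt ℝ (⊤ : ℕ∞) (fderiv ℝ F) (c t) :=
        (hsmooth (c t) (cpos t)).fderiv_right (by simp)
      exact (h2.differentiableAt (by simp)).clm_apply (differentiableAt_const _)
    have h3 := hΦ.hasFDerivAt.comp_hasDerivAt t (hcd t)
    have h4 : HasDerivAt (fun s => fderiv ℝ F (c s) (Pi.single k 1))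
        (fderiv ℝ (fun x => fderiv ℝ F x (Pi.single k 1)) (c t) (fun k => v k * c t k)) t := h3
    rw [clm_apply_sum_aux] at h4
    exact h4
  -- second derivative of φ
  set H : ℝ → ℝ := fun t => ∑ k,
      ((∑ l, fderiv ℝ (fun x => fderiv ℝ F x (Pi.single k 1)) (c t) (Pi.single l 1)
          * (v l * c t l)) * (v k * c t k)
        + fderiv ℝ F (c t) (Pi.single k 1) * (v k * (v k * c t k))) with hHdef
  have hhd : ∀ t, HasDerivAt h (H t) t := by
    intro t
    refine HasDerivAt.fun_sum fun k _ => ?_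
    have hck : HasDerivAt (fun s => v k * c s k) (v k * (v k * c t k)) t :=
      ((hasDerivAt_pi.1 (hcd t)) k).const_mul (v k)
    exact (hgd t k).mul hck
  -- the second derivative is nonnegative (log-convexity)
  have hH0 : ∀ t, 0 ≤ H t := by
    intro t
    have key := hineq (c t) (cpos t) (fun k => v k * c t k)
    have e2 : H t = (∑ k, ∑ l, fderiv ℝ (fun x => fderiv ℝ F x (Pi.single k 1)) (c t)
          (Pi.single l 1) * (v k * c t k) * (v l * c t l))
        + ∑ k, fderiv ℝ F (c t) (Pi.single k 1) / c t k * (v k * c t k) ^ 2 := by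
      simp only [hHdef]
      rw [Finset.sum_add_distrib]
      congr 1
      · refine Finset.sum_congr rfl fun k _ => ?_
        rw [Finset.sum_mul]
        refine Finset.sum_congr rfl fun l _ => ?_
        ring
      · refine Finset.sum_congr rfl fun k _ => ?_
        have hck := (cpos t k).ne'
        field_simp
    have hFpos := hpos (c t) (cpos t)
    have hsq : 0 ≤ (F (c t))⁻¹ * (∑ k, fderiv ℝ F (c t) (Pi.single k 1) * (v k * c t k)) ^ 2 :=
      mul_nonneg (inv_nonneg.2 hFpos.le) (sq_nonneg _)
    rw [e2]
    linarith
  -- hence h is monotone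
  have hmonoh : Monotone h :=
    monotone_of_deriv_nonneg (fun t => (hhd t).differentiableAt)
      (fun t => by rw [(hhd t).deriv]; exact hH0 t)
  -- mean value theorem on [0,1]
  have hφcont : ContinuousOn φ (Set.Icc 0 1) :=
    fun t _ => ((hφd t).continuousAt).continuousWithinAt
  obtain ⟨ξ, hξ, hslope⟩ := exists_hasDerivAt_eq_slope φ h one_pos hφcont
    (fun t _ => hφd t)
  have hφ01 : φ 1 = φ 0 := by
    simp only [hφdef]
    rw [hc1, hc0, hsymm (Equiv.swap i j) κ]
  have hξ0 : h ξ = 0 := by rw [hslope, hφ01]; simp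
  have h00 : h 0 ≤ 0 := by
    have := hmonoh hξ.1.le
    linarith
  -- compute h 0
  have hh0 : h 0 = (Real.log (κ j) - Real.log (κ i))
      * (fderiv ℝ F κ (Pi.single i 1) * κ i - fderiv ℝ F κ (Pi.single j 1) * κ j) := by
    have e0 : h 0 = ∑ k, fderiv ℝ F κ (Pi.single k 1) * (v k * κ k) := by
      simp only [hhdef, hc0]
    rw [e0, ← Finset.sum_subset (Finset.subset_univ {i, j})]
    · rw [Finset.sum_pair hij]
      have hvi : v i = Real.log (κ j) - Real.log (κ i) := by simp [hv]
      have hvj : v j = Real.log (κ i) - Real.log (κ j) := by simp [hv, Ne.symm hij]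
      rw [hvi, hvj]
      ring
    · intro k _ hk
      simp only [Finset.mem_insert, Finset.mem_singleton, not_or] at hk
      simp [hv, hk.1, hk.2]
  rw [hh0] at h00
  -- the key monotonicity: (Ḟⁱκᵢ − Ḟʲκⱼ)(κᵢ − κⱼ) ≥ 0
  have key2 : 0 ≤ (fderiv ℝ F κ (Pi.single i 1) * κ i
      - fderiv ℝ F κ (Pi.single j 1) * κ j) * (κ i - κ j) := by
    rcases lt_or_gt_of_ne hvij with hlt | hgt
    · have hlog : 0 < Real.log (κ j) - Real.log (κ i) :=
        sub_pos.2 (Real.log_lt_log (hκ i) hlt)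
      nlinarith
    · have hlog : Real.log (κ j) - Real.log (κ i) < 0 :=
        sub_neg.2 (Real.log_lt_log (hκ j) hgt)
      nlinarith
  -- finish by the algebraic identity
  have hab : κ i - κ j ≠ 0 := sub_ne_zero.2 hvij
  have hbpos := hκ j
  have e : (fderiv ℝ F κ (Pi.single i 1) - fderiv ℝ F κ (Pi.single j 1)) / (κ i - κ j)
      + fderiv ℝ F κ (Pi.single i 1) / κ j
      = ((fderiv ℝ F κ (Pi.single i 1) * κ i - fderiv ℝ F κ (Pi.single j 1) * κ j)
          * (κ i - κ j)) / ((κ i - κ j) ^ 2 * κ j) := by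
    field_simp
    ring
  rw [e]
  exact div_nonneg key2 (by positivity)
end
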